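/- Fix an integer n ≥ 4. Let π_R : ℝ^{2n−1} → ℝ^{n−1} × ℝ^{n−1} be the right projection of the model folded cross cap canonical relation: π_R(x, y_{n−1}, θ'') = ((x₁ + (x_n² − x_{n−1}²)y_{n−1} + x_n y_{n−1}², x₂, …, x_{n−2}, y_{n−1}), (θ₁, …, θ_{n−2}, −(2x_n y_{n−1} + x_n² − x_{n−1}²)θ₁)). Then at every point p = (x, y_{n−1}, θ'') with θ₁ ≠ 0: the derivative Dπ_R(p) has rank 2n−3 if x_{n−1} = 0 and x_n + y_{n−1} = 0, and rank 2n−2 otherwise. -/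

import Mathlib

open ContinuousLinearMap

/-- The right projection `π_R` of the model folded cross cap canonical relation.
Points of `ℝ^{2n-1}` are written `(x, y_{n-1}, θ'')` with `x = (x₁, …, x_n)`
(indexed by `0, …, n-1`), `y_{n-1} ∈ ℝ` and `θ'' = (θ₁, …, θ_{n-2})`
(indexed by `0, …, n-3`).  Then
`π_R(x, y_{n-1}, θ'') = ((x₁ + (x_n² - x_{n-1}²) y_{n-1} + x_n y_{n-1}², x₂, …, x_{n-2},
y_{n-1}), (θ₁, …, θ_{n-2}, -(2 x_n y_{n-1} + x_n² - x_{n-1}²) θ₁))`. -/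
noncomputable def piR (n : ℕ) (hn : 4 ≤ n)
    (p : (Fin n → ℝ) × ℝ × (Fin (n - 2) → ℝ)) :
    (Fin (n - 1) → ℝ) × (Fin (n - 1) → ℝ) :=
  ⟨fun i =>
      if (i : ℕ) = 0 then
        p.1 ⟨0, by omega⟩ +
          ((p.1 ⟨n - 1, by omega⟩) ^ 2 - (p.1 ⟨n - 2, by omega⟩) ^ 2) * p.2.1 +
          p.1 ⟨n - 1, by omega⟩ * p.2.1 ^ 2
      else if (i : ℕ) = n - 2 then p.2.1
      else p.1 ⟨(i : ℕ), lt_of_lt_of_le i.isLt (Nat.sub_le n 1)⟩,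
    fun i =>
      if h : (i : ℕ) = n - 2 then
        -(2 * p.1 ⟨n - 1, by omega⟩ * p.2.1 +
            (p.1 ⟨n - 1, by omega⟩) ^ 2 - (p.1 ⟨n - 2, by omega⟩) ^ 2) * p.2.2 ⟨0, by omega⟩
      else p.2.2 ⟨(i : ℕ), by have := i.isLt; omega⟩⟩


namespace CC

abbrev E (n : ℕ) : Type := (Fin n → ℝ) × ℝ × (Fin (n - 2) → ℝ)
abbrev F (n : ℕ) : Type := (Fin (n - 1) → ℝ) × (Fin (n - 1) → ℝ)

noncomputable def PX (n : ℕ) (j : Fin n) : E n →L[ℝ] ℝ :=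
  (proj j).comp (fst ℝ (Fin n → ℝ) (ℝ × (Fin (n - 2) → ℝ)))

noncomputable def PY (n : ℕ) : E n →L[ℝ] ℝ :=
  (fst ℝ ℝ (Fin (n - 2) → ℝ)).comp (snd ℝ (Fin n → ℝ) (ℝ × (Fin (n - 2) → ℝ)))

noncomputable def PT (n : ℕ) (j : Fin (n - 2)) : E n →L[ℝ] ℝ :=
  (proj j).comp ((snd ℝ ℝ (Fin (n - 2) → ℝ)).comp (snd ℝ (Fin n → ℝ) (ℝ × (Fin (n - 2) → ℝ))))

@[simp] lemma PX_apply (n : ℕ) (j : Fin n) (v : E n) : PX n j v = v.1 j := rfl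
@[simp] lemma PY_apply (n : ℕ) (v : E n) : PY n v = v.2.1 := rfl
@[simp] lemma PT_apply (n : ℕ) (j : Fin (n - 2)) (v : E n) : PT n j v = v.2.2 j := rfl

noncomputable def dpiR (n : ℕ) (hn : 4 ≤ n) (p : E n) : E n →L[ℝ] F n :=
  (ContinuousLinearMap.pi fun i : Fin (n - 1) =>
    if (i : ℕ) = 0 then
      PX n ⟨0, by omega⟩ +
        ((-2 * p.1 ⟨n - 2, by omega⟩ * p.2.1) • PX n ⟨n - 2, by omega⟩ +
        ((2 * p.1 ⟨n - 1, by omega⟩ * p.2.1 + p.2.1 ^ 2) • PX n ⟨n - 1, by omega⟩ +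
        ((p.1 ⟨n - 1, by omega⟩) ^ 2 - (p.1 ⟨n - 2, by omega⟩) ^ 2
          + 2 * p.1 ⟨n - 1, by omega⟩ * p.2.1) • PY n))
    else if (i : ℕ) = n - 2 then PY n
    else PX n ⟨(i : ℕ), by have := i.isLt; omega⟩).prod
  (ContinuousLinearMap.pi fun i : Fin (n - 1) =>
    if h : (i : ℕ) = n - 2 then
      (2 * p.1 ⟨n - 2, by omega⟩ * p.2.2 ⟨0, by omega⟩) • PX n ⟨n - 2, by omega⟩ +
      ((-(2 * p.2.1 + 2 * p.1 ⟨n - 1, by omega⟩) * p.2.2 ⟨0, by omega⟩) • PX n ⟨n - 1, by omega⟩ +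
      ((-2 * p.1 ⟨n - 1, by omega⟩ * p.2.2 ⟨0, by omega⟩) • PY n +
      (-(2 * p.1 ⟨n - 1, by omega⟩ * p.2.1 + (p.1 ⟨n - 1, by omega⟩) ^ 2
         - (p.1 ⟨n - 2, by omega⟩) ^ 2)) • PT n ⟨0, by omega⟩))
    else PT n ⟨(i : ℕ), by have := i.isLt; omega⟩)

theorem hasFDerivAt_piR (n : ℕ) (hn : 4 ≤ n) (p : E n) :
    HasFDerivAt (piR n hn) (dpiR n hn p) p := by
  have hx0 := (PX n ⟨0, by omega⟩).hasFDerivAt (x := p)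
  have ha := (PX n ⟨n - 2, by omega⟩).hasFDerivAt (x := p)
  have hb := (PX n ⟨n - 1, by omega⟩).hasFDerivAt (x := p)
  have hy := (PY n).hasFDerivAt (x := p)
  have ht := (PT n ⟨0, by omega⟩).hasFDerivAt (x := p)
  refine HasFDerivAt.prodMk ?_ ?_
  · apply hasFDerivAt_pi''
    intro i
    rw [proj_pi]
    by_cases hi0 : (i : ℕ) = 0
    · simp only [if_pos hi0]
      simp only [pow_two]
      refine ((hx0.add (((hb.mul hb).sub (ha.mul ha)).mul hy)).add (hb.mul (hy.mul hy))).congr_fderiv ?_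
      refine ContinuousLinearMap.ext fun v => ?_
      simp only [ContinuousLinearMap.add_apply, ContinuousLinearMap.smul_apply,
        ContinuousLinearMap.neg_apply, ContinuousLinearMap.sub_apply, PX_apply, PY_apply,
        PT_apply, smul_eq_mul, Pi.mul_apply, Pi.pow_apply, Pi.sub_apply, Pi.neg_apply,
        Pi.add_apply]
      ring
    · by_cases hi2 : (i : ℕ) = n - 2
      · simp only [if_neg hi0, if_pos hi2]
        exact hy
      · simp only [if_neg hi0, if_neg hi2]
        exact (PX n ⟨(i : ℕ), by have := i.isLt; omega⟩).hasFDerivAt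
  · apply hasFDerivAt_pi''
    intro i
    rw [proj_pi]
    by_cases hi2 : (i : ℕ) = n - 2
    · simp only [dif_pos hi2]
      simp only [pow_two]
      refine (((((hb.const_mul 2).mul hy).add (hb.mul hb)).sub (ha.mul ha)).neg.mul ht).congr_fderiv ?_
      refine ContinuousLinearMap.ext fun v => ?_
      simp only [ContinuousLinearMap.add_apply, ContinuousLinearMap.smul_apply,
        ContinuousLinearMap.neg_apply, ContinuousLinearMap.sub_apply, PX_apply, PY_apply,
        PT_apply, smul_eq_mul, Pi.mul_apply, Pi.pow_apply, Pi.sub_apply, Pi.neg_apply,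
        Pi.add_apply]
      ring
    · simp only [dif_neg hi2]
      exact (PT n ⟨(i : ℕ), by have := i.isLt; omega⟩).hasFDerivAt


theorem dpiR_apply (n : ℕ) (hn : 4 ≤ n) (p v : E n) :
    dpiR n hn p v =
      (fun i : Fin (n - 1) =>
        if (i : ℕ) = 0 then
          v.1 ⟨0, by omega⟩ + (-2 * p.1 ⟨n - 2, by omega⟩ * p.2.1) * v.1 ⟨n - 2, by omega⟩ +
            (2 * p.1 ⟨n - 1, by omega⟩ * p.2.1 + p.2.1 ^ 2) * v.1 ⟨n - 1, by omega⟩ +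
            ((p.1 ⟨n - 1, by omega⟩) ^ 2 - (p.1 ⟨n - 2, by omega⟩) ^ 2
              + 2 * p.1 ⟨n - 1, by omega⟩ * p.2.1) * v.2.1
        else if (i : ℕ) = n - 2 then v.2.1
        else v.1 ⟨(i : ℕ), by have := i.isLt; omega⟩,
       fun i : Fin (n - 1) =>
        if h : (i : ℕ) = n - 2 then
          (2 * p.1 ⟨n - 2, by omega⟩ * p.2.2 ⟨0, by omega⟩) * v.1 ⟨n - 2, by omega⟩ +
          (-(2 * p.2.1 + 2 * p.1 ⟨n - 1, by omega⟩) * p.2.2 ⟨0, by omega⟩) * v.1 ⟨n - 1, by omega⟩ +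
          (-2 * p.1 ⟨n - 1, by omega⟩ * p.2.2 ⟨0, by omega⟩) * v.2.1 +
          (-(2 * p.1 ⟨n - 1, by omega⟩ * p.2.1 + (p.1 ⟨n - 1, by omega⟩) ^ 2
             - (p.1 ⟨n - 2, by omega⟩) ^ 2)) * v.2.2 ⟨0, by omega⟩
        else v.2.2 ⟨(i : ℕ), by have := i.isLt; omega⟩) := by
  unfold dpiR
  refine Prod.ext ?_ ?_ <;> funext i <;>
    simp only [prod_apply, pi_apply] <;> split_ifs with h1 h2 <;>
    simp [smul_eq_mul] <;> ring

set_option maxHeartbeats 1000000 in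
/-- Kernel element structure: equations satisfied by any `v` in the kernel of `dpiR`. -/
theorem ker_struct (n : ℕ) (hn : 4 ≤ n) (p : E n) (v : E n) (hv : dpiR n hn p v = 0) :
    (∀ j : Fin n, 1 ≤ (j : ℕ) → (j : ℕ) ≤ n - 3 → v.1 j = 0) ∧ v.2.1 = 0 ∧ v.2.2 = 0 ∧
    (v.1 ⟨0, by omega⟩ + (-2 * p.1 ⟨n - 2, by omega⟩ * p.2.1) * v.1 ⟨n - 2, by omega⟩ +
      (2 * p.1 ⟨n - 1, by omega⟩ * p.2.1 + p.2.1 ^ 2) * v.1 ⟨n - 1, by omega⟩ = 0) ∧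
    ((2 * p.1 ⟨n - 2, by omega⟩ * p.2.2 ⟨0, Nat.sub_pos_of_lt (by omega)⟩) * v.1 ⟨n - 2, by omega⟩ +
      (-(2 * p.2.1 + 2 * p.1 ⟨n - 1, by omega⟩) * p.2.2 ⟨0, Nat.sub_pos_of_lt (by omega)⟩) * v.1 ⟨n - 1, by omega⟩
        = 0) := by
  rw [dpiR_apply] at hv
  have h1 := fun i => congrFun (congrArg Prod.fst hv) i
  have h2 := fun i => congrFun (congrArg Prod.snd hv) i
  have hy0 : v.2.1 = 0 := by
    have h := h1 ⟨n - 2, by omega⟩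
    simp only [Prod.fst_zero, Pi.zero_apply] at h
    rw [if_neg (show ¬ (((⟨n - 2, by omega⟩ : Fin (n - 1)) : ℕ) = 0) by simp; omega)] at h
    simpa using h
  have hθ0 : v.2.2 = 0 := by
    funext j
    have h := h2 ⟨(j : ℕ), by have := j.isLt; omega⟩
    simp only [Prod.snd_zero, Pi.zero_apply] at h
    rw [dif_neg (show ¬ (((⟨(j : ℕ), by have := j.isLt; omega⟩ : Fin (n - 1)) : ℕ) = n - 2) by
      simp; have := j.isLt; omega)] at h
    simpa using h
  refine ⟨?_, hy0, hθ0, ?_, ?_⟩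
  · intro j h1j h2j
    have h := h1 ⟨(j : ℕ), by omega⟩
    simp only [Prod.fst_zero, Pi.zero_apply] at h
    rw [if_neg (show ¬ (((⟨(j : ℕ), by omega⟩ : Fin (n - 1)) : ℕ) = 0) by simp; omega),
      if_neg (show ¬ (((⟨(j : ℕ), by omega⟩ : Fin (n - 1)) : ℕ) = n - 2) by simp; omega)] at h
    simpa using h
  · have h := h1 ⟨0, by omega⟩
    simp only [Prod.fst_zero, Pi.zero_apply] at h
    rw [if_pos trivial] at h
    simp only [hy0, mul_zero, add_zero] at h
    linear_combination h
  · have h := h2 ⟨n - 2, by omega⟩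
    simp only [Prod.snd_zero, Pi.zero_apply] at h
    rw [dif_pos trivial] at h
    have ht0 : v.2.2 ⟨0, by omega⟩ = 0 := by simp [hθ0]
    simp only [hy0, ht0, mul_zero, add_zero] at h
    linear_combination h

noncomputable def e1 (n : ℕ) : E n :=
  (fun j => if (j : ℕ) = n - 2 then 1 else 0, 0, 0)

noncomputable def e2 (n : ℕ) (b : ℝ) : E n :=
  (fun j => if (j : ℕ) = 0 then b ^ 2 else if (j : ℕ) = n - 1 then 1 else 0, 0, 0)

noncomputable def gv (n : ℕ) (a b y : ℝ) : E n :=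
  (fun j => if (j : ℕ) = 0 then a * y ^ 2 else if (j : ℕ) = n - 2 then y + b
    else if (j : ℕ) = n - 1 then a else 0, 0, 0)

set_option maxHeartbeats 1000000 in
theorem mem_ker_of (n : ℕ) (hn : 4 ≤ n) (p w : E n)
    (h1 : ∀ j : Fin n, 1 ≤ (j : ℕ) → (j : ℕ) ≤ n - 3 → w.1 j = 0)
    (h2 : w.2.1 = 0) (h3 : w.2.2 = 0)
    (h4 : w.1 ⟨0, by omega⟩ + (-2 * p.1 ⟨n - 2, by omega⟩ * p.2.1) * w.1 ⟨n - 2, by omega⟩ +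
      (2 * p.1 ⟨n - 1, by omega⟩ * p.2.1 + p.2.1 ^ 2) * w.1 ⟨n - 1, by omega⟩ = 0)
    (h5 : (2 * p.1 ⟨n - 2, by omega⟩ * p.2.2 ⟨0, Nat.sub_pos_of_lt (by omega)⟩) * w.1 ⟨n - 2, by omega⟩ +
      (-(2 * p.2.1 + 2 * p.1 ⟨n - 1, by omega⟩) * p.2.2 ⟨0, Nat.sub_pos_of_lt (by omega)⟩) * w.1 ⟨n - 1, by omega⟩
        = 0) :
    dpiR n hn p w = 0 := by
  have ht0 : w.2.2 ⟨0, by omega⟩ = 0 := by simp [h3]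
  rw [dpiR_apply]
  refine Prod.ext (funext fun i => ?_) (funext fun i => ?_) <;>
    simp only [Prod.fst_zero, Prod.snd_zero, Pi.zero_apply]
  · split_ifs with c1 c2
    · rw [h2]
      linear_combination h4
    · exact h2
    · exact h1 ⟨(i : ℕ), by have := i.isLt; omega⟩ (show 1 ≤ (i : ℕ) by omega)
        (show (i : ℕ) ≤ n - 3 by have := i.isLt; omega)
  · split_ifs with c
    · rw [h2, ht0]
      linear_combination h5
    · simp [h3]

set_option maxHeartbeats 1000000 in
theorem ker_crit (n : ℕ) (hn : 4 ≤ n) (p : E n)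
    (ha : p.1 ⟨n - 2, by omega⟩ = 0) (hby : p.1 ⟨n - 1, by omega⟩ + p.2.1 = 0) :
    LinearMap.ker (dpiR n hn p).toLinearMap =
      Submodule.span ℝ (Set.range ![e1 n, e2 n (p.1 ⟨n - 1, by omega⟩)]) := by
  have c0e1 : (e1 n).1 ⟨0, by omega⟩ = 0 := if_neg (show ¬((0 : ℕ) = n - 2) by omega)
  have cme1 : (e1 n).1 ⟨n - 2, by omega⟩ = 1 := if_pos rfl
  have cbe1 : (e1 n).1 ⟨n - 1, by omega⟩ = 0 := if_neg (show ¬((n - 1 : ℕ) = n - 2) by omega)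
  set b := p.1 ⟨n - 1, by omega⟩ with hbdef
  have c0e2 : (e2 n b).1 ⟨0, by omega⟩ = b ^ 2 := by simp [e2]
  have cme2 : (e2 n b).1 ⟨n - 2, by omega⟩ = 0 :=
    (if_neg (show ¬((n - 2 : ℕ) = 0) by omega)).trans
      (if_neg (show ¬((n - 2 : ℕ) = n - 1) by omega))
  have cbe2 : (e2 n b).1 ⟨n - 1, by omega⟩ = 1 :=
    (if_neg (show ¬((n - 1 : ℕ) = 0) by omega)).trans (if_pos rfl)
  apply le_antisymm
  · intro v hv
    rw [LinearMap.mem_ker] at hv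
    obtain ⟨hz, hy0, hθ0, rowA, rowB⟩ := ker_struct n hn p v hv
    have hx0 : v.1 ⟨0, by omega⟩ = b ^ 2 * v.1 ⟨n - 1, by omega⟩ := by
      linear_combination rowA + (2 * p.2.1 * v.1 ⟨n - 2, by omega⟩) * ha -
        ((b + p.2.1) * v.1 ⟨n - 1, by omega⟩) * hby
    have hrepr : v = v.1 ⟨n - 2, by omega⟩ • e1 n + v.1 ⟨n - 1, by omega⟩ • e2 n b := by
      refine Prod.ext (funext fun j => ?_) (Prod.ext ?_ ?_)
      · simp only [Prod.fst_add, Prod.smul_fst, Pi.add_apply, Pi.smul_apply, smul_eq_mul]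
        by_cases j0 : (j : ℕ) = 0
        · rw [show j = ⟨0, by omega⟩ from Fin.ext j0, c0e1, c0e2, hx0]
          ring
        · by_cases j2 : (j : ℕ) = n - 2
          · rw [show j = ⟨n - 2, by omega⟩ from Fin.ext j2, cme1, cme2]
            ring
          · by_cases j1 : (j : ℕ) = n - 1
            · rw [show j = ⟨n - 1, by omega⟩ from Fin.ext j1, cbe1, cbe2]
              ring
            · rw [hz j (by omega) (by have := j.isLt; omega),
                show (e1 n).1 j = 0 from if_neg j2,
                show (e2 n b).1 j = 0 from (if_neg j0).trans (if_neg j1)]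
              ring
      · simpa [e1, e2] using hy0
      · simpa [e1, e2] using hθ0
    rw [hrepr]
    exact Submodule.add_mem _
      (Submodule.smul_mem _ _ (Submodule.subset_span ⟨0, rfl⟩))
      (Submodule.smul_mem _ _ (Submodule.subset_span ⟨1, rfl⟩))
  · rw [Submodule.span_le]
    rintro w ⟨k, rfl⟩
    simp only [SetLike.mem_coe, LinearMap.mem_ker]
    fin_cases k
    · show dpiR n hn p (e1 n) = 0
      refine mem_ker_of n hn p _ (fun j hj1 hj2 => if_neg (by omega)) rfl rfl ?_ ?_
      · rw [c0e1, cme1, cbe1]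
        linear_combination (-2 * p.2.1) * ha
      · rw [cme1, cbe1]
        linear_combination (2 * p.2.2 ⟨0, by omega⟩) * ha
    · show dpiR n hn p (e2 n b) = 0
      refine mem_ker_of n hn p _
        (fun j hj1 hj2 => (if_neg (by omega)).trans (if_neg (by omega))) rfl rfl ?_ ?_
      · rw [c0e2, cme2, cbe2]
        linear_combination (b + p.2.1) * hby
      · rw [cme2, cbe2]
        linear_combination (-2 * p.2.2 ⟨0, by omega⟩) * hby

set_option maxHeartbeats 1000000 in
theorem ker_noncrit (n : ℕ) (hn : 4 ≤ n) (p : E n)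
    (hθ : p.2.2 ⟨0, Nat.sub_pos_of_lt (by omega)⟩ ≠ 0)
    (hnc : ¬ (p.1 ⟨n - 2, by omega⟩ = 0 ∧ p.1 ⟨n - 1, by omega⟩ + p.2.1 = 0)) :
    LinearMap.ker (dpiR n hn p).toLinearMap =
      Submodule.span ℝ {gv n (p.1 ⟨n - 2, by omega⟩) (p.1 ⟨n - 1, by omega⟩) p.2.1} := by
  have c0 : (gv n (p.1 ⟨n - 2, by omega⟩) (p.1 ⟨n - 1, by omega⟩) p.2.1).1 ⟨0, by omega⟩ =
      p.1 ⟨n - 2, by omega⟩ * p.2.1 ^ 2 := by simp [gv]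
  have cm : (gv n (p.1 ⟨n - 2, by omega⟩) (p.1 ⟨n - 1, by omega⟩) p.2.1).1 ⟨n - 2, by omega⟩ =
      p.2.1 + p.1 ⟨n - 1, by omega⟩ := by
    exact (if_neg (show ¬((n - 2 : ℕ) = 0) by omega)).trans (if_pos rfl)
  have cb : (gv n (p.1 ⟨n - 2, by omega⟩) (p.1 ⟨n - 1, by omega⟩) p.2.1).1 ⟨n - 1, by omega⟩ =
      p.1 ⟨n - 2, by omega⟩ := by
    exact (if_neg (show ¬((n - 1 : ℕ) = 0) by omega)).trans
      ((if_neg (show ¬((n - 1 : ℕ) = n - 2) by omega)).trans (if_pos rfl))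
  apply le_antisymm
  · intro v hv
    rw [LinearMap.mem_ker] at hv
    obtain ⟨hz, hy0, hθ0, rowA, rowB⟩ := ker_struct n hn p v hv
    have key : p.1 ⟨n - 2, by omega⟩ * v.1 ⟨n - 2, by omega⟩ =
        (p.2.1 + p.1 ⟨n - 1, by omega⟩) * v.1 ⟨n - 1, by omega⟩ := by
      have h' : p.2.2 ⟨0, by omega⟩ * (2 * (p.1 ⟨n - 2, by omega⟩ * v.1 ⟨n - 2, by omega⟩ -
          (p.2.1 + p.1 ⟨n - 1, by omega⟩) * v.1 ⟨n - 1, by omega⟩)) = 0 := by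
        linear_combination rowB
      have h'' := (mul_eq_zero.mp h').resolve_left hθ
      linarith
    by_cases hA : p.1 ⟨n - 2, by omega⟩ = 0
    · have hyb : p.2.1 + p.1 ⟨n - 1, by omega⟩ ≠ 0 := fun h => hnc ⟨hA, by linarith⟩
      have hvb : v.1 ⟨n - 1, by omega⟩ = 0 := by
        have h0 : (p.2.1 + p.1 ⟨n - 1, by omega⟩) * v.1 ⟨n - 1, by omega⟩ = 0 := by
          linear_combination -key + (v.1 ⟨n - 2, by omega⟩) * hA
        exact (mul_eq_zero.mp h0).resolve_left hyb
      have hvx0 : v.1 ⟨0, by omega⟩ = 0 := by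
        linear_combination rowA + (2 * p.2.1 * v.1 ⟨n - 2, by omega⟩) * hA -
          (2 * p.1 ⟨n - 1, by omega⟩ * p.2.1 + p.2.1 ^ 2) * hvb
      refine Submodule.mem_span_singleton.mpr
        ⟨v.1 ⟨n - 2, by omega⟩ / (p.2.1 + p.1 ⟨n - 1, by omega⟩), ?_⟩
      refine Prod.ext (funext fun j => ?_) (Prod.ext ?_ ?_)
      · simp only [Prod.smul_fst, Pi.smul_apply, smul_eq_mul]
        by_cases j0 : (j : ℕ) = 0
        · rw [show j = ⟨0, by omega⟩ from Fin.ext j0, c0, hA, hvx0]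
          ring
        · by_cases j2 : (j : ℕ) = n - 2
          · rw [show j = ⟨n - 2, by omega⟩ from Fin.ext j2, cm]
            exact div_mul_cancel₀ _ hyb
          · by_cases j1 : (j : ℕ) = n - 1
            · rw [show j = ⟨n - 1, by omega⟩ from Fin.ext j1, cb, hA, hvb]
              ring
            · rw [hz j (by omega) (by have := j.isLt; omega),
                show (gv n (p.1 ⟨n - 2, by omega⟩) (p.1 ⟨n - 1, by omega⟩) p.2.1).1 j = 0 from
                  (if_neg j0).trans ((if_neg j2).trans (if_neg j1))]
              ring
      · simpa [gv] using hy0.symm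
      · simpa [gv] using hθ0.symm
    · have hvx0 : v.1 ⟨0, by omega⟩ = p.2.1 ^ 2 * v.1 ⟨n - 1, by omega⟩ := by
        linear_combination rowA + (2 * p.2.1) * key
      refine Submodule.mem_span_singleton.mpr
        ⟨v.1 ⟨n - 1, by omega⟩ / p.1 ⟨n - 2, by omega⟩, ?_⟩
      refine Prod.ext (funext fun j => ?_) (Prod.ext ?_ ?_)
      · simp only [Prod.smul_fst, Pi.smul_apply, smul_eq_mul]
        by_cases j0 : (j : ℕ) = 0
        · rw [show j = ⟨0, by omega⟩ from Fin.ext j0, c0, hvx0]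
          field_simp
        · by_cases j2 : (j : ℕ) = n - 2
          · rw [show j = ⟨n - 2, by omega⟩ from Fin.ext j2, cm, div_mul_eq_mul_div,
              div_eq_iff hA]
            linear_combination -key
          · by_cases j1 : (j : ℕ) = n - 1
            · rw [show j = ⟨n - 1, by omega⟩ from Fin.ext j1, cb]
              exact div_mul_cancel₀ _ hA
            · rw [hz j (by omega) (by have := j.isLt; omega),
                show (gv n (p.1 ⟨n - 2, by omega⟩) (p.1 ⟨n - 1, by omega⟩) p.2.1).1 j = 0 from
                  (if_neg j0).trans ((if_neg j2).trans (if_neg j1))]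
              ring
      · simpa [gv] using hy0.symm
      · simpa [gv] using hθ0.symm
  · rw [Submodule.span_le, Set.singleton_subset_iff]
    simp only [SetLike.mem_coe, LinearMap.mem_ker]
    refine mem_ker_of n hn p _
      (fun j hj1 hj2 => (if_neg (by omega)).trans ((if_neg (by omega)).trans
        (if_neg (by omega)))) rfl rfl ?_ ?_
    · rw [c0, cm, cb]
      ring
    · rw [cm, cb]
      ring

end CC

/-- at every point with `θ₁ ≠ 0`, the derivative `Dπ_R(p)` has rank `2n-3`
if `x_{n-1} = 0` and `x_n + y_{n-1} = 0`, and rank `2n-2` otherwise. -/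
theorem stmt_4 (n : ℕ) (hn : 4 ≤ n)
    (p : (Fin n → ℝ) × ℝ × (Fin (n - 2) → ℝ))
    (hθ : p.2.2 ⟨0, by omega⟩ ≠ 0) :
    ((p.1 ⟨n - 2, by omega⟩ = 0 ∧ p.1 ⟨n - 1, by omega⟩ + p.2.1 = 0) →
      Module.finrank ℝ (LinearMap.range (fderiv ℝ (piR n hn) p).toLinearMap) = 2 * n - 3) ∧
    (¬ (p.1 ⟨n - 2, by omega⟩ = 0 ∧ p.1 ⟨n - 1, by omega⟩ + p.2.1 = 0) →
      Module.finrank ℝ (LinearMap.range (fderiv ℝ (piR n hn) p).toLinearMap) = 2 * n - 2) := by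
  have hd : fderiv ℝ (piR n hn) p = CC.dpiR n hn p := (CC.hasFDerivAt_piR n hn p).fderiv
  have hE : Module.finrank ℝ (CC.E n) = 2 * n - 1 := by
    rw [Module.finrank_prod, Module.finrank_prod, Module.finrank_fin_fun,
      Module.finrank_fin_fun, Module.finrank_self]
    omega
  have hrn := LinearMap.finrank_range_add_finrank_ker
    ((CC.dpiR n hn p : CC.E n →L[ℝ] CC.F n) : CC.E n →ₗ[ℝ] CC.F n)
  have hre : LinearMap.range ((CC.dpiR n hn p : CC.E n →L[ℝ] CC.F n) : CC.E n →ₗ[ℝ] CC.F n)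
      = LinearMap.range (CC.dpiR n hn p).toLinearMap := rfl
  have hke : LinearMap.ker ((CC.dpiR n hn p : CC.E n →L[ℝ] CC.F n) : CC.E n →ₗ[ℝ] CC.F n)
      = LinearMap.ker (CC.dpiR n hn p).toLinearMap := rfl
  rw [hre, hke, hE] at hrn
  constructor
  · rintro ⟨ha, hby⟩
    have hker := CC.ker_crit n hn p ha hby
    have cme1 : (CC.e1 n).1 ⟨n - 2, by omega⟩ = 1 := if_pos rfl
    have cbe1 : (CC.e1 n).1 ⟨n - 1, by omega⟩ = 0 :=
      if_neg (show ¬((n - 1 : ℕ) = n - 2) by omega)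
    have cme2 : (CC.e2 n (p.1 ⟨n - 1, by omega⟩)).1 ⟨n - 2, by omega⟩ = 0 :=
      (if_neg (show ¬((n - 2 : ℕ) = 0) by omega)).trans
        (if_neg (show ¬((n - 2 : ℕ) = n - 1) by omega))
    have cbe2 : (CC.e2 n (p.1 ⟨n - 1, by omega⟩)).1 ⟨n - 1, by omega⟩ = 1 :=
      (if_neg (show ¬((n - 1 : ℕ) = 0) by omega)).trans (if_pos rfl)
    have hli : LinearIndependent ℝ ![CC.e1 n, CC.e2 n (p.1 ⟨n - 1, by omega⟩)] := by
      rw [LinearIndependent.pair_iff]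
      intro s u hsu
      have h1 := congrFun (congrArg Prod.fst hsu) ⟨n - 2, by omega⟩
      have h2 := congrFun (congrArg Prod.fst hsu) ⟨n - 1, by omega⟩
      simp only [Prod.fst_add, Prod.smul_fst, Pi.add_apply, Pi.smul_apply, smul_eq_mul,
        Prod.fst_zero, Pi.zero_apply, cme1, cme2, cbe1, cbe2, mul_one, mul_zero,
        add_zero, zero_add] at h1 h2
      exact ⟨h1, h2⟩
    have hk2 : Module.finrank ℝ (LinearMap.ker (CC.dpiR n hn p).toLinearMap) = 2 := by
      rw [hker, finrank_span_eq_card hli]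
      simp
    rw [hd]
    rw [hk2] at hrn
    exact (Nat.eq_sub_of_add_eq hrn).trans (by omega)
  · intro hnc
    have hker := CC.ker_noncrit n hn p hθ hnc
    have cm : (CC.gv n (p.1 ⟨n - 2, by omega⟩) (p.1 ⟨n - 1, by omega⟩) p.2.1).1
        ⟨n - 2, by omega⟩ = p.2.1 + p.1 ⟨n - 1, by omega⟩ :=
      (if_neg (show ¬((n - 2 : ℕ) = 0) by omega)).trans (if_pos rfl)
    have cb : (CC.gv n (p.1 ⟨n - 2, by omega⟩) (p.1 ⟨n - 1, by omega⟩) p.2.1).1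
        ⟨n - 1, by omega⟩ = p.1 ⟨n - 2, by omega⟩ :=
      (if_neg (show ¬((n - 1 : ℕ) = 0) by omega)).trans
        ((if_neg (show ¬((n - 1 : ℕ) = n - 2) by omega)).trans (if_pos rfl))
    have hg0 : CC.gv n (p.1 ⟨n - 2, by omega⟩) (p.1 ⟨n - 1, by omega⟩) p.2.1 ≠ 0 := by
      intro h0
      apply hnc
      have h1 := congrFun (congrArg Prod.fst h0) ⟨n - 2, by omega⟩
      have h2 := congrFun (congrArg Prod.fst h0) ⟨n - 1, by omega⟩
      rw [cm] at h1
      rw [cb] at h2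
      simp only [Prod.fst_zero, Pi.zero_apply] at h1 h2
      exact ⟨h2, by linarith⟩
    have hk1 : Module.finrank ℝ (LinearMap.ker (CC.dpiR n hn p).toLinearMap) = 1 := by
      rw [hker]
      exact finrank_span_singleton hg0
    rw [hd]
    rw [hk1] at hrn
    exact (Nat.eq_sub_of_add_eq hrn).trans (by omega)
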